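/- arXiv:1807.03497 — 3 statements merged into one kernel-verified Lean document; each statement's English description precedes it below -/
import Mathlib

section
/- Let N ≥ 3, 2 ≤ β < N, and let k ∈ ℝ. Define w(y) = F((N+β)/4 − 1, (N−β)/4, 1/2; y) + k √y · F((N+β)/4 − 1/2, (N−β)/4 + 1/2, 3/2; y) for y ∈ [0,1), and set f(θ) = w(sin²θ) for θ ∈ [0, π/2). Then f(0) = 1 and f satisfies f''(θ) − (N−2) tan(θ) f'(θ) − ( (N−2)²/4 − (β−2)²/4 ) f(θ) = 0 for all θ ∈ (0, π/2). -/
open Real MeasureTheory Filter Set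

noncomputable section

/-- A Finsler norm on `ℝ^n`: nonnegative, `C²` away from the origin, with strictly
convex unit ball, positively `1`-homogeneous (even), and comparable to the Euclidean norm. -/
structure IsFinslerNorm {n : ℕ} (H : EuclideanSpace ℝ (Fin n) → ℝ) : Prop where
  nonneg : ∀ ξ, 0 ≤ H ξ
  contDiff : ContDiffOn ℝ 2 H {(0 : EuclideanSpace ℝ (Fin n))}ᶜ
  strictConvex : StrictConvex ℝ {ξ : EuclideanSpace ℝ (Fin n) | H ξ ≤ 1}
  homog : ∀ (c : ℝ) (ξ : EuclideanSpace ℝ (Fin n)), H (c • ξ) = |c| * H ξ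
  bounds : ∃ γ₁ γ₂ : ℝ, 0 < γ₁ ∧ γ₁ ≤ γ₂ ∧
    ∀ ξ, γ₁ * ‖ξ‖ ≤ H ξ ∧ H ξ ≤ γ₂ * ‖ξ‖

/-- The dual (polar) norm `H⁰(x) = sup_{ξ ≠ 0} ⟨ξ,x⟩ / H(ξ)`. -/
def dualNorm {n : ℕ} (H : EuclideanSpace ℝ (Fin n) → ℝ)
    (x : EuclideanSpace ℝ (Fin n)) : ℝ :=
  sSup ((fun ξ => (inner ℝ ξ x : ℝ) / H ξ) '' {ξ : EuclideanSpace ℝ (Fin n) | ξ ≠ 0})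

/-- The constant `K(N,β)`. -/
def KConst (N : ℕ) (β : ℝ) : ℝ :=
  2 * Real.Gamma ((N + β) / 4 - 1 / 2) * Real.Gamma ((N - β) / 4 + 1 / 2) /
    (Real.Gamma ((N + β) / 4 - 1) * Real.Gamma ((N - β) / 4))

/-- The hypergeometric series `F(a,b,c;y)`. -/
def hypergeom (a b c y : ℝ) : ℝ :=
  1 + Real.Gamma c / (Real.Gamma a * Real.Gamma b) *
    ∑' k : ℕ, Real.Gamma (a + (k + 1 : ℕ)) * Real.Gamma (b + (k + 1 : ℕ)) /
      Real.Gamma (c + (k + 1 : ℕ)) * y ^ (k + 1) / (Nat.factorial (k + 1) : ℝ)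

/-- The spatial part `∇ₓu` of the full gradient of `u : ℝ^n × ℝ → ℝ`. -/
def gradX {n : ℕ} (u : EuclideanSpace ℝ (Fin n) × ℝ → ℝ)
    (z : EuclideanSpace ℝ (Fin n) × ℝ) : EuclideanSpace ℝ (Fin n) :=
  gradient (fun y => u (y, z.2)) z.1

/-- The `t`-part `∂u/∂t` of the full gradient of `u : ℝ^n × ℝ → ℝ`. -/
def dT {n : ℕ} (u : EuclideanSpace ℝ (Fin n) × ℝ → ℝ)
    (z : EuclideanSpace ℝ (Fin n) × ℝ) : ℝ :=
  deriv (fun s => u (z.1, s)) z.2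

/-- The full gradient `∇u = (∇ₓ u, ∂u/∂t)`. -/
def grad2 {n : ℕ} (u : EuclideanSpace ℝ (Fin n) × ℝ → ℝ)
    (z : EuclideanSpace ℝ (Fin n) × ℝ) : EuclideanSpace ℝ (Fin n) × ℝ :=
  (gradX u z, dT u z)

/-- Divergence of a vector field on `ℝ^n × ℝ` (sum of all `n+1` partial derivatives). -/
def div2 {n : ℕ} (V : EuclideanSpace ℝ (Fin n) × ℝ → EuclideanSpace ℝ (Fin n) × ℝ)
    (z : EuclideanSpace ℝ (Fin n) × ℝ) : ℝ :=
  (∑ i, (fderiv ℝ V z (EuclideanSpace.single i 1, 0)).1 i) + (fderiv ℝ V z (0, 1)).2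

/-- Finsler Laplacian `Δ_Φ φ = div (Φ(∇φ) ∇Φ(∇φ))` on `ℝ^n × ℝ`. -/
def finslerLap {n : ℕ} (Φ φ : EuclideanSpace ℝ (Fin n) × ℝ → ℝ)
    (z : EuclideanSpace ℝ (Fin n) × ℝ) : ℝ :=
  div2 (fun w => Φ (grad2 φ w) • grad2 Φ (grad2 φ w)) z

/-!
Put `a = (N + β) / 4 - 1`, `b = (N - β) / 4` and `s = sin θ`. Then `f(θ) = G(s)` with
`G(s) = ∑ c_m s^m`, where the even coefficients `c_{2j}` are those of `F(a, b, 1/2; ·)` and the odd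
ones `c_{2j+1}` are `k` times those of `F(a + 1/2, b + 1/2, 3/2; ·)`. The contiguity of the Gamma
factors makes this interleaved sequence satisfy the single recurrence
`(m + 2)(m + 1) c_{m+2} = (m² + 2(a + b) m + 4ab) c_m`, which says exactly that `G` solves
`(1 - s²) G'' - (N - 1) s G' - 4ab G = 0` on `(-1, 1)`; the substitution `s = sin θ` turns this
into the stated equation, since `2(a + b) = N - 2` and `4ab = ((N - 2)² - (β - 2)²) / 4`.

The recurrence also gives the analysis: it forces `|c_m| = O(q^m)` for every `q > 1`, and it is
inherited by the coefficients `(m + 1) c_{m+1}` of `G'`, so `G` and `G'` may be differentiated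
termwise on `(-1, 1)`.
-/

open scoped Topology

def powerSum (c : ℕ → ℝ) (s : ℝ) : ℝ :=
  ∑' m, c m * s ^ m

def derivCoeff (c : ℕ → ℝ) (m : ℕ) : ℝ :=
  (m + 1) * c (m + 1)

def SummableOnUnitBall (c : ℕ → ℝ) : Prop :=
  ∀ r, 0 ≤ r → r < 1 → Summable fun m => |c m| * r ^ m

/-- The recurrence on the coefficients of a power series solution `G` of
`(1 - s²) G'' - (ν + 1) s G' - μ G = 0`. -/
def HypergeomRecurrence (ν μ : ℝ) (c : ℕ → ℝ) : Prop :=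
  ∀ m : ℕ, ((m : ℝ) + 2) * (m + 1) * c (m + 2) = ((m : ℝ) ^ 2 + ν * m + μ) * c m

section PowerSeries

variable {c : ℕ → ℝ} {ν μ : ℝ}

theorem SummableOnUnitBall.summable_mul_pow (hc : SummableOnUnitBall c) {s : ℝ} (hs : |s| < 1) :
    Summable fun m => c m * s ^ m :=
  .of_norm_bounded (hc |s| (abs_nonneg s) hs) fun m => by
    rw [norm_mul, norm_pow, Real.norm_eq_abs, Real.norm_eq_abs]

theorem SummableOnUnitBall.comp_two_mul_add (hc : SummableOnUnitBall c) (i : ℕ) :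
    SummableOnUnitBall fun j => c (2 * j + i) := by
  intro r hr0 hr1
  set t := √((1 + r) / 2) with ht
  have ht0 : 0 < t := Real.sqrt_pos.2 (by linarith)
  have ht1 : t < 1 := by rw [ht, Real.sqrt_lt' one_pos]; linarith
  have hrt : r ≤ t ^ 2 := by rw [ht, Real.sq_sqrt (by linarith)]; linarith
  have hsub : Summable fun j => |c (2 * j + i)| * t ^ (2 * j + i) :=
    (hc t ht0.le ht1).comp_injective fun x y h => by simpa using h
  refine .of_nonneg_of_le (fun j => by positivity) (fun j => ?_) (hsub.mul_left (t ^ i)⁻¹)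
  calc |c (2 * j + i)| * r ^ j ≤ |c (2 * j + i)| * (t ^ 2) ^ j := by gcongr
    _ = (t ^ i)⁻¹ * (|c (2 * j + i)| * t ^ (2 * j + i)) := by
      rw [pow_add, pow_mul]; field_simp

theorem derivCoeff_derivCoeff (c : ℕ → ℝ) (m : ℕ) :
    derivCoeff (derivCoeff c) m = ((m : ℝ) + 2) * (m + 1) * c (m + 2) := by
  simp only [derivCoeff]; push_cast; ring

theorem HypergeomRecurrence.derivSeries (h : HypergeomRecurrence ν μ c) :
    HypergeomRecurrence (ν + 2) (μ + ν + 1) (derivCoeff c) := by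
  intro m
  have := h (m + 1)
  simp only [derivCoeff]
  push_cast at this ⊢
  linear_combination ((m : ℝ) + 1) * this

theorem abs_le_geometric_of_abs_add_two_le {q : ℝ} {M : ℕ} (hq : 1 ≤ q)
    (hstep : ∀ m ≥ M, |c (m + 2)| ≤ q ^ 2 * |c m|) : ∃ C, ∀ m, |c m| ≤ C * q ^ m := by
  refine ⟨∑ i ∈ Finset.range (M + 2), |c i|, fun m => ?_⟩
  induction m using Nat.strong_induction_on with
  | _ m ih =>
    rcases lt_or_ge m (M + 2) with hm | hm
    · calc |c m| ≤ ∑ i ∈ Finset.range (M + 2), |c i| :=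
            Finset.single_le_sum (fun i _ => abs_nonneg (c i)) (Finset.mem_range.2 hm)
        _ ≤ _ := le_mul_of_one_le_right (by positivity) (one_le_pow₀ hq)
    · obtain ⟨n, rfl⟩ : ∃ n, m = n + 2 := ⟨m - 2, by omega⟩
      calc |c (n + 2)| ≤ q ^ 2 * |c n| := hstep n (by omega)
        _ ≤ q ^ 2 * ((∑ i ∈ Finset.range (M + 2), |c i|) * q ^ n) := by
          gcongr; exact ih n (by omega)
        _ = _ := by ring

theorem HypergeomRecurrence.abs_add_two_le (h : HypergeomRecurrence ν μ c) {q : ℝ}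
    (hq : 1 < q) : ∃ M, ∀ m ≥ M, |c (m + 2)| ≤ q ^ 2 * |c m| := by
  obtain ⟨M, hM⟩ := exists_nat_ge ((|ν| + |μ|) / (q ^ 2 - 1))
  have hq2 : 0 < q ^ 2 - 1 := by nlinarith
  rw [div_le_iff₀ hq2] at hM
  refine ⟨M + 1, fun m hm => ?_⟩
  have hm1 : (M : ℝ) + 1 ≤ m := by exact_mod_cast hm
  have hcoef : |(m : ℝ) ^ 2 + ν * m + μ| ≤ q ^ 2 * (((m : ℝ) + 2) * (m + 1)) := by
    have hνμ : (|ν| + |μ|) * m ≤ (q ^ 2 - 1) * m * m := by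
      rw [mul_right_comm]; gcongr; nlinarith
    calc |(m : ℝ) ^ 2 + ν * m + μ| ≤ m ^ 2 + |ν| * m + |μ| * m := by
          have := abs_add_three ((m : ℝ) ^ 2) (ν * m) μ
          rw [abs_mul, abs_of_nonneg (by positivity : (0 : ℝ) ≤ m ^ 2), Nat.abs_cast] at this
          nlinarith [abs_nonneg μ]
      _ ≤ q ^ 2 * (((m : ℝ) + 2) * (m + 1)) := by nlinarith
  have hpos : (0 : ℝ) < ((m : ℝ) + 2) * (m + 1) := by positivity
  refine le_of_mul_le_mul_left ?_ hpos
  calc ((m : ℝ) + 2) * (m + 1) * |c (m + 2)| = |(m : ℝ) ^ 2 + ν * m + μ| * |c m| := by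
        rw [← abs_of_pos hpos, ← abs_mul, ← abs_mul, h m]
    _ ≤ q ^ 2 * (((m : ℝ) + 2) * (m + 1)) * |c m| := by gcongr
    _ = _ := by ring

theorem HypergeomRecurrence.summableOnUnitBall (h : HypergeomRecurrence ν μ c) :
    SummableOnUnitBall c := by
  intro r hr0 hr1
  have hq : 1 < 2 / (1 + r) := by rw [lt_div_iff₀ (by linarith)]; linarith
  obtain ⟨M, hM⟩ := h.abs_add_two_le hq
  obtain ⟨C, hC⟩ := abs_le_geometric_of_abs_add_two_le hq.le hM
  have hqr0 : 0 ≤ 2 / (1 + r) * r := by positivity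
  have hqr1 : 2 / (1 + r) * r < 1 := by rw [div_mul_eq_mul_div, div_lt_one (by linarith)]; linarith
  refine .of_nonneg_of_le (fun m => by positivity) (fun m => ?_)
    ((summable_geometric_of_lt_one hqr0 hqr1).mul_left C)
  calc |c m| * r ^ m ≤ C * (2 / (1 + r)) ^ m * r ^ m := by gcongr; exact hC m
    _ = C * (2 / (1 + r) * r) ^ m := by rw [mul_pow, mul_assoc]

theorem hasDerivAt_powerSum (hc : SummableOnUnitBall (derivCoeff c)) {s : ℝ} (hs : |s| < 1) :
    HasDerivAt (powerSum c) (powerSum (derivCoeff c) s) s := by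
  set r := (|s| + 1) / 2
  have hsr : |s| < r := by simp only [r]; linarith
  have hr1 : r < 1 := by simp only [r]; linarith
  have hu : Summable fun m => m * |c m| * r ^ (m - 1) := by
    refine (summable_nat_add_iff 1).1 ((hc r (by positivity) hr1).congr fun m => ?_)
    simp [derivCoeff, abs_mul, abs_of_nonneg (by positivity : (0 : ℝ) ≤ m + 1)]
  have hbound : ∀ (m : ℕ), ∀ y ∈ Ioo (-r) r, ‖m * c m * y ^ (m - 1)‖ ≤ m * |c m| * r ^ (m - 1) := by
    intro m y hy
    simp only [norm_mul, norm_pow, Real.norm_eq_abs, Nat.abs_cast]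
    gcongr
    exact abs_le.2 ⟨hy.1.le, hy.2.le⟩
  have hshift : ∑' m : ℕ, m * c m * s ^ (m - 1) = powerSum (derivCoeff c) s := by
    rw [← Nat.succ_injective.tsum_eq]
    · simp [powerSum, derivCoeff]
    · intro m hm
      have : m ≠ 0 := by rintro rfl; simp at hm
      exact ⟨m - 1, by omega⟩
  rw [← hshift]
  exact hasDerivAt_tsum_of_isPreconnected hu isOpen_Ioo (convex_Ioo (-r) r).isPreconnected
    (fun m y _ => by
      simpa [mul_comm, mul_assoc, mul_left_comm] using (hasDerivAt_pow m y).const_mul (c m))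
    hbound (y₀ := 0) (by constructor <;> linarith [abs_nonneg s])
    (summable_of_ne_finset_zero (s := {0}) (by simp +contextual)) (abs_lt.1 hsr)

theorem HasSum.natCast_mul_of_derivCoeff {s b : ℝ}
    (h : HasSum (fun m => derivCoeff c m * s ^ m) b) :
    HasSum (fun m => m * c m * s ^ m) (s * b) := by
  rw [← Nat.succ_injective.hasSum_iff]
  · refine (h.mul_left s).congr_fun fun m => ?_
    simp only [derivCoeff, Function.comp_apply, Nat.succ_eq_add_one]
    push_cast; ring
  · intro m hm
    obtain rfl : m = 0 := by by_contra h0; exact hm ⟨m - 1, by omega⟩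
    simp

theorem HasSum.natCast_mul_natCast_sub_one_mul_of_derivCoeff {s a : ℝ}
    (h : HasSum (fun m => derivCoeff (derivCoeff c) m * s ^ m) a) :
    HasSum (fun m => m * (m - 1) * c m * s ^ m) (s ^ 2 * a) := by
  rw [← (add_left_injective 2).hasSum_iff]
  · refine (h.mul_left (s ^ 2)).congr_fun fun m => ?_
    simp only [derivCoeff_derivCoeff, Function.comp_apply]
    push_cast; ring
  · intro m hm
    obtain rfl | rfl : m = 0 ∨ m = 1 := by
      by_contra h0; exact hm ⟨m - 2, by simp only; omega⟩
    all_goals simp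

theorem HypergeomRecurrence.ode (h : HypergeomRecurrence ν μ c) {s : ℝ} (hs : |s| < 1) :
    (1 - s ^ 2) * powerSum (derivCoeff (derivCoeff c)) s - (ν + 1) * s * powerSum (derivCoeff c) s
      - μ * powerSum c s = 0 := by
  have h0 : HasSum (fun m => c m * s ^ m) (powerSum c s) :=
    (h.summableOnUnitBall.summable_mul_pow hs).hasSum
  have h1 : HasSum (fun m => derivCoeff c m * s ^ m) (powerSum (derivCoeff c) s) :=
    (h.derivSeries.summableOnUnitBall.summable_mul_pow hs).hasSum
  have h2 : HasSum (fun m => derivCoeff (derivCoeff c) m * s ^ m)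
      (powerSum (derivCoeff (derivCoeff c)) s) :=
    (h.derivSeries.derivSeries.summableOnUnitBall.summable_mul_pow hs).hasSum
  have h2' : HasSum (fun m : ℕ => ((m : ℝ) ^ 2 + ν * m + μ) * c m * s ^ m)
      (powerSum (derivCoeff (derivCoeff c)) s) :=
    h2.congr_fun fun m => by rw [derivCoeff_derivCoeff, h m]
  have hzero := ((h2'.sub h2.natCast_mul_natCast_sub_one_mul_of_derivCoeff).sub
      (h1.natCast_mul_of_derivCoeff.mul_left (ν + 1))).sub (h0.mul_left μ)
  linear_combination (hzero.congr_fun fun m => by ring).unique hasSum_zero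

theorem abs_sin_lt_one_of_mem_Ioo {θ : ℝ} (hθ : θ ∈ Ioo (-(π / 2)) (π / 2)) : |sin θ| < 1 := by
  have hcos := cos_pos_of_mem_Ioo hθ
  rw [← sq_lt_one_iff_abs_lt_one]
  nlinarith [sin_sq_add_cos_sq θ]

theorem deriv_deriv_comp_sin_sub_mul_tan {G G' G'' : ℝ → ℝ} (ν : ℝ)
    (hG : ∀ s, |s| < 1 → HasDerivAt G (G' s) s) (hG' : ∀ s, |s| < 1 → HasDerivAt G' (G'' s) s)
    {θ : ℝ} (hθ : θ ∈ Ioo (-(π / 2)) (π / 2)) :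
    deriv (deriv (G ∘ sin)) θ - ν * tan θ * deriv (G ∘ sin) θ =
      (1 - sin θ ^ 2) * G'' (sin θ) - (ν + 1) * sin θ * G' (sin θ) := by
  have hderiv : ∀ t ∈ Ioo (-(π / 2)) (π / 2), deriv (G ∘ sin) t = G' (sin t) * cos t :=
    fun t ht => ((hG _ (abs_sin_lt_one_of_mem_Ioo ht)).comp t (hasDerivAt_sin t)).deriv
  have hderiv2 : deriv (deriv (G ∘ sin)) θ = G'' (sin θ) * cos θ * cos θ - G' (sin θ) * sin θ := by
    rw [Filter.EventuallyEq.deriv_eq (eventually_of_mem (isOpen_Ioo.mem_nhds hθ) hderiv)]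
    have := ((hG' _ (abs_sin_lt_one_of_mem_Ioo hθ)).comp θ (hasDerivAt_sin θ)).mul
      (hasDerivAt_cos θ)
    refine this.deriv.trans ?_
    simp only [Function.comp_apply]
    ring
  have hcos : cos θ ≠ 0 := (cos_pos_of_mem_Ioo hθ).ne'
  rw [hderiv2, hderiv θ hθ, tan_eq_sin_div_cos, ← cos_sq']
  field_simp
  ring

theorem HypergeomRecurrence.ode_comp_sin (h : HypergeomRecurrence ν μ c) {θ : ℝ}
    (hθ : θ ∈ Ioo (-(π / 2)) (π / 2)) :
    deriv (deriv (powerSum c ∘ sin)) θ - ν * tan θ * deriv (powerSum c ∘ sin) θ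
      - μ * powerSum c (sin θ) = 0 := by
  rw [deriv_deriv_comp_sin_sub_mul_tan ν
    (fun s hs => hasDerivAt_powerSum h.derivSeries.summableOnUnitBall hs)
    (fun s hs => hasDerivAt_powerSum h.derivSeries.derivSeries.summableOnUnitBall hs) hθ]
  exact h.ode (abs_sin_lt_one_of_mem_Ioo hθ)

end PowerSeries

/-- The `j`-th coefficient `(a)_j (b)_j / ((c)_j j!)` of `hypergeom a b c`, with the Pochhammer
symbols written as quotients of Gamma values. -/
def hypergeomCoeff (a b c : ℝ) (j : ℕ) : ℝ :=
  Gamma (a + j) * Gamma (b + j) * Gamma c / (Gamma a * Gamma b * Gamma (c + j) * j.factorial)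

section HypergeomCoeff

variable {a b c : ℝ}

theorem hypergeomCoeff_zero (ha : 0 < a) (hb : 0 < b) (hc : 0 < c) :
    hypergeomCoeff a b c 0 = 1 := by
  have := Gamma_pos_of_pos ha
  have := Gamma_pos_of_pos hb
  have := Gamma_pos_of_pos hc
  simp only [hypergeomCoeff, Nat.cast_zero, add_zero, Nat.factorial_zero, Nat.cast_one, mul_one]
  field_simp

theorem hypergeomCoeff_succ (ha : 0 < a) (hb : 0 < b) (hc : 0 < c) (j : ℕ) :
    (c + j) * (j + 1) * hypergeomCoeff a b c (j + 1) =
      (a + j) * (b + j) * hypergeomCoeff a b c j := by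
  have := Gamma_pos_of_pos ha
  have := Gamma_pos_of_pos hb
  have := Gamma_pos_of_pos (by positivity : 0 < c + j)
  have hcj : c + j ≠ 0 := by positivity
  simp only [hypergeomCoeff, Nat.cast_succ, ← add_assoc, Gamma_add_one (by positivity : a + j ≠ 0),
    Gamma_add_one (by positivity : b + j ≠ 0), Gamma_add_one hcj, Nat.factorial_succ, Nat.cast_mul]
  field_simp

theorem hypergeom_eq_powerSum (ha : 0 < a) (hb : 0 < b) (hc : 0 < c) {y : ℝ}
    (hsum : Summable fun j => hypergeomCoeff a b c j * y ^ j) :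
    hypergeom a b c y = powerSum (hypergeomCoeff a b c) y := by
  rw [powerSum, hsum.tsum_eq_zero_add, pow_zero, mul_one, hypergeomCoeff_zero ha hb hc, hypergeom,
    ← tsum_mul_left]
  congr 2 with j
  have := Gamma_pos_of_pos ha
  have := Gamma_pos_of_pos hb
  have := Gamma_pos_of_pos (by positivity : 0 < c + (j + 1 : ℕ))
  simp only [hypergeomCoeff]
  field_simp

end HypergeomCoeff

/-- The coefficients of `F(a, b, 1/2; s²) + k s F(a + 1/2, b + 1/2, 3/2; s²)` as a power series
in `s`. -/
def solutionCoeff (a b k : ℝ) (m : ℕ) : ℝ :=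
  if Even m then hypergeomCoeff a b (1 / 2) (m / 2)
  else k * hypergeomCoeff (a + 1 / 2) (b + 1 / 2) (3 / 2) (m / 2)

section SolutionCoeff

variable {a b : ℝ} (k : ℝ)

@[simp]
theorem solutionCoeff_two_mul (j : ℕ) :
    solutionCoeff a b k (2 * j) = hypergeomCoeff a b (1 / 2) j := by
  simp [solutionCoeff]

@[simp]
theorem solutionCoeff_two_mul_add_one (j : ℕ) :
    solutionCoeff a b k (2 * j + 1) = k * hypergeomCoeff (a + 1 / 2) (b + 1 / 2) (3 / 2) j := by
  simp [solutionCoeff, Nat.add_div_of_dvd_right]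

theorem hypergeomRecurrence_solutionCoeff (ha : 0 < a) (hb : 0 < b) :
    HypergeomRecurrence (2 * (a + b)) (4 * a * b) (solutionCoeff a b k) := by
  intro m
  obtain ⟨j, rfl | rfl⟩ := Nat.even_or_odd' m
  · have := hypergeomCoeff_succ ha hb one_half_pos j
    rw [show 2 * j + 2 = 2 * (j + 1) by ring, solutionCoeff_two_mul, solutionCoeff_two_mul]
    push_cast
    linear_combination 4 * this
  · have := hypergeomCoeff_succ (by linarith : 0 < a + 1 / 2) (by linarith : 0 < b + 1 / 2)
      (by norm_num : (0 : ℝ) < 3 / 2) j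
    rw [show 2 * j + 1 + 2 = 2 * (j + 1) + 1 by ring, solutionCoeff_two_mul_add_one,
      solutionCoeff_two_mul_add_one]
    push_cast
    linear_combination 4 * k * this

theorem summableOnUnitBall_hypergeomCoeff_half (ha : 0 < a) (hb : 0 < b) :
    SummableOnUnitBall (hypergeomCoeff a b (1 / 2)) := by
  simpa using ((hypergeomRecurrence_solutionCoeff 0 ha hb).summableOnUnitBall.comp_two_mul_add 0)

theorem summableOnUnitBall_hypergeomCoeff_three_halves (ha : 0 < a) (hb : 0 < b) :
    SummableOnUnitBall (hypergeomCoeff (a + 1 / 2) (b + 1 / 2) (3 / 2)) := by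
  simpa using ((hypergeomRecurrence_solutionCoeff 1 ha hb).summableOnUnitBall.comp_two_mul_add 1)

theorem powerSum_solutionCoeff (ha : 0 < a) (hb : 0 < b) {s : ℝ} (hs : |s| < 1) :
    powerSum (solutionCoeff a b k) s =
      hypergeom a b (1 / 2) (s ^ 2) +
        k * s * hypergeom (a + 1 / 2) (b + 1 / 2) (3 / 2) (s ^ 2) := by
  have hy : |s ^ 2| < 1 := by rw [abs_pow]; exact pow_lt_one₀ (abs_nonneg s) hs two_ne_zero
  have he := (summableOnUnitBall_hypergeomCoeff_half ha hb).summable_mul_pow hy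
  have ho := (summableOnUnitBall_hypergeomCoeff_three_halves ha hb).summable_mul_pow hy
  rw [hypergeom_eq_powerSum ha hb one_half_pos he,
    hypergeom_eq_powerSum (by linarith) (by linarith) (by norm_num) ho]
  refine (HasSum.even_add_odd ?_ ?_).tsum_eq
  · exact he.hasSum.congr_fun fun j => by rw [solutionCoeff_two_mul, pow_mul]
  · exact (ho.hasSum.mul_left (k * s)).congr_fun fun j => by
      rw [solutionCoeff_two_mul_add_one, pow_succ, pow_mul]; ring

end SolutionCoeff

theorem hypergeom_zero (a b c : ℝ) : hypergeom a b c 0 = 1 := by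
  simp [hypergeom]

/-- **`f(θ) = w(sin²θ)` solves the ODE (3.10) with `f(0) = 1`** (from (3.11)). -/
theorem hypergeom_combination_solves_ode (N : ℕ) (hN : 3 ≤ N) (β : ℝ)
    (hβ2 : 2 ≤ β) (hβN : β < N) (k : ℝ) (w f : ℝ → ℝ)
    (hw : ∀ y ∈ Ico (0 : ℝ) 1,
      w y = hypergeom ((N + β) / 4 - 1) ((N - β) / 4) (1 / 2) y +
        k * Real.sqrt y * hypergeom ((N + β) / 4 - 1 / 2) ((N - β) / 4 + 1 / 2) (3 / 2) y)
    (hf : ∀ θ ∈ Ico 0 (π / 2), f θ = w (Real.sin θ ^ 2)) :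
    f 0 = 1 ∧
      ∀ θ ∈ Ioo 0 (π / 2),
        deriv (deriv f) θ - (N - 2) * Real.tan θ * deriv f θ -
          ((N - 2) ^ 2 / 4 - (β - 2) ^ 2 / 4) * f θ = 0 := by
  have hN' : (3 : ℝ) ≤ N := by exact_mod_cast hN
  have ha : 0 < ((N : ℝ) + β) / 4 - 1 := by linarith
  have hb : 0 < ((N : ℝ) - β) / 4 := by linarith
  set c := solutionCoeff (((N : ℝ) + β) / 4 - 1) (((N : ℝ) - β) / 4) k
  have hrec : HypergeomRecurrence (N - 2) ((N - 2) ^ 2 / 4 - (β - 2) ^ 2 / 4) c := by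
    convert hypergeomRecurrence_solutionCoeff k ha hb using 1 <;> ring
  have hfc : ∀ θ ∈ Ico 0 (π / 2), f θ = powerSum c (sin θ) := by
    intro θ hθ
    have hsin := abs_sin_lt_one_of_mem_Ioo ⟨by linarith [hθ.1, pi_pos], hθ.2⟩
    have hsin0 : 0 ≤ sin θ := sin_nonneg_of_nonneg_of_le_pi hθ.1 (by linarith [hθ.2, pi_pos])
    rw [hf θ hθ, hw _ ⟨sq_nonneg _, by rwa [sq_lt_one_iff_abs_lt_one]⟩, sqrt_sq hsin0,
      powerSum_solutionCoeff k ha hb hsin]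
    congr 3
    ring
  refine ⟨by simp [hf 0 ⟨le_rfl, by positivity⟩, hw 0 ⟨le_rfl, one_pos⟩, hypergeom_zero], ?_⟩
  intro θ hθ
  have hev : f =ᶠ[𝓝 θ] powerSum c ∘ sin :=
    eventually_of_mem (Ioo_mem_nhds hθ.1 hθ.2) fun t ht => hfc t (Ioo_subset_Ico_self ht)
  rw [hev.deriv.deriv_eq, hev.deriv_eq, hev.eq_of_nhds]
  exact hrec.ode_comp_sin ⟨by linarith [hθ.1, pi_pos], hθ.2⟩
end
end

section
/- Let N ≥ 3, let Φ be a Finsler norm on ℝ^N with dual norm Φ⁰, let Δ_Φ φ = div( Φ(∇φ) ∇Φ(∇φ) ), and let c ∈ ℝ. Let U ⊆ ℝ^N be open with 0 ∉ U, and let φ : U → (0,∞) be a C² function satisfying Δ_Φ φ + c φ/(Φ⁰)² = 0 on U and ∇φ ≠ 0 on U. Define the vector field F : U × ℝ → ℝ^{N+1} by F(z,h) = ( (2h/φ(z)) Φ(∇φ(z)) ∇Φ(∇φ(z)), (h²/φ(z)²) Φ(∇φ(z))² + c h²/Φ⁰(z)² ). Then F is divergence free: the sum over all N+1 coordinates of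 the corresponding partial derivatives of F vanishes at every point of U × ℝ. -/
open Real MeasureTheory Filter Set

noncomputable section

/-- Divergence of a vector field on `ℝ^n`. -/
def divE {n : ℕ} (V : EuclideanSpace ℝ (Fin n) → EuclideanSpace ℝ (Fin n))
    (z : EuclideanSpace ℝ (Fin n)) : ℝ :=
  ∑ i, fderiv ℝ V z (EuclideanSpace.single i 1) i

/-- Finsler Laplacian `Δ_Φ φ = div (Φ(∇φ) ∇Φ(∇φ))` on `ℝ^n`. -/
def finslerLapE {n : ℕ} (Φ φ : EuclideanSpace ℝ (Fin n) → ℝ)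
    (z : EuclideanSpace ℝ (Fin n)) : ℝ :=
  divE (fun w => Φ (gradient φ w) • gradient Φ (gradient φ w)) z

/-! With `W = Φ(∇φ) ∇Φ(∇φ)`, the spatial divergence of `(2h/φ) W` is
`(2h/φ) Δ_Φ φ - (2h/φ²) ⟨∇φ, W⟩`. Euler's identity for the `1`-homogeneous `Φ` gives
`⟨∇φ, W⟩ = Φ(∇φ)²`, and the equation gives `Δ_Φ φ = -c φ / (Φ⁰)²`; the resulting
`-2h (Φ(∇φ)²/φ² + c/(Φ⁰)²)` is cancelled by the `h`-derivative of the last component,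
`h² (Φ(∇φ)²/φ² + c/(Φ⁰)²)`. -/

theorem ContDiffAt.differentiableAt_gradient {F : Type*} [NormedAddCommGroup F]
    [InnerProductSpace ℝ F] [CompleteSpace F] {f : F → ℝ} {x : F} (hf : ContDiffAt ℝ 2 f x) :
    DifferentiableAt ℝ (gradient f) x :=
  ((InnerProductSpace.toDual ℝ F).symm.contDiff.contDiffAt.comp x
    (hf.fderiv_right le_rfl)).differentiableAt one_ne_zero

theorem fderiv_apply_self_of_homogeneous {E : Type*} [NormedAddCommGroup E] [NormedSpace ℝ E]
    {f : E → ℝ} {ξ : E} (hhom : ∀ t > 0, f (t • ξ) = t * f ξ) (hf : DifferentiableAt ℝ f ξ) :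
    fderiv ℝ f ξ ξ = f ξ := by
  have hf1 : HasFDerivAt f (fderiv ℝ f ξ) ((1 : ℝ) • ξ) := by
    rw [one_smul]; exact hf.hasFDerivAt
  have hline : HasDerivAt (fun t : ℝ => t • ξ) ξ 1 := by
    simpa using (hasDerivAt_id (1 : ℝ)).smul_const ξ
  have hray : HasDerivAt (fun t : ℝ => f (t • ξ)) (fderiv ℝ f ξ ξ) 1 :=
    hf1.comp_hasDerivAt 1 hline
  have hlin : HasDerivAt (fun t : ℝ => f (t • ξ)) (f ξ) 1 := by
    have := (hasDerivAt_id (1 : ℝ)).mul_const (f ξ)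
    rw [one_mul] at this
    refine this.congr_of_eventuallyEq ?_
    filter_upwards [eventually_gt_nhds zero_lt_one] with t ht using hhom t ht
  exact hray.unique hlin

namespace IsFinslerNorm

variable {n : ℕ} {Φ : EuclideanSpace ℝ (Fin n) → ℝ}

theorem contDiffAt (hΦ : IsFinslerNorm Φ) {ξ : EuclideanSpace ℝ (Fin n)} (hξ : ξ ≠ 0) :
    ContDiffAt ℝ 2 Φ ξ :=
  hΦ.contDiff.contDiffAt (isOpen_compl_singleton.mem_nhds hξ)

theorem inner_smul_gradient (hΦ : IsFinslerNorm Φ) {ξ : EuclideanSpace ℝ (Fin n)} (hξ : ξ ≠ 0) :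
    inner ℝ ξ (Φ ξ • gradient Φ ξ) = Φ ξ ^ 2 := by
  rw [real_inner_smul_right, real_inner_comm, inner_gradient_left,
    fderiv_apply_self_of_homogeneous (fun t ht => by rw [hΦ.homog, abs_of_pos ht])
      ((hΦ.contDiffAt hξ).differentiableAt two_ne_zero), sq]

end IsFinslerNorm

section Divergence

variable {n : ℕ}

theorem divE_smul {a : EuclideanSpace ℝ (Fin n) → ℝ}
    {V : EuclideanSpace ℝ (Fin n) → EuclideanSpace ℝ (Fin n)} {z : EuclideanSpace ℝ (Fin n)}
    (ha : DifferentiableAt ℝ a z) (hV : DifferentiableAt ℝ V z) :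
    divE (fun x => a x • V x) z = a z * divE V z + fderiv ℝ a z (V z) := by
  have hcoord : fderiv ℝ a z (V z) = ∑ i, V z i * fderiv ℝ a z (EuclideanSpace.single i 1) := by
    conv_lhs => rw [← (EuclideanSpace.basisFun (Fin n) ℝ).sum_repr (V z)]
    simp [map_sum]
  rw [divE, divE, (ha.hasFDerivAt.fun_smul hV.hasFDerivAt).fderiv, Finset.mul_sum, hcoord,
    ← Finset.sum_add_distrib]
  simp [mul_comm]

theorem div2_eq_zero_of_not_differentiableAt
    {V : EuclideanSpace ℝ (Fin n) × ℝ → EuclideanSpace ℝ (Fin n) × ℝ}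
    {p : EuclideanSpace ℝ (Fin n) × ℝ} (hV : ¬ DifferentiableAt ℝ V p) : div2 V p = 0 := by
  simp [div2, fderiv_zero_of_not_differentiableAt hV]

theorem div2_eq_divE_add_deriv
    {V : EuclideanSpace ℝ (Fin n) × ℝ → EuclideanSpace ℝ (Fin n) × ℝ}
    {z : EuclideanSpace ℝ (Fin n)} {t : ℝ} (hV : DifferentiableAt ℝ V (z, t)) :
    div2 V (z, t) = divE (fun x => (V (x, t)).1) z + deriv (fun s => (V (z, s)).2) t := by
  have hx : HasFDerivAt (fun x => V (x, t))
      ((fderiv ℝ V (z, t)).comp (.inl ℝ _ ℝ)) z :=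
    hV.hasFDerivAt.comp z (hasFDerivAt_prodMk_left z t)
  have ht : HasFDerivAt (fun s => V (z, s))
      ((fderiv ℝ V (z, t)).comp (.inr ℝ (EuclideanSpace ℝ (Fin n)) ℝ)) t :=
    hV.hasFDerivAt.comp t (hasFDerivAt_prodMk_right z t)
  rw [div2, divE, hx.fst.fderiv, ht.snd.hasDerivAt.deriv]
  simp

end Divergence

theorem field_divergence_free_general (N : ℕ) (c : ℝ)
    (Φ : EuclideanSpace ℝ (Fin N) → ℝ) (hΦ : IsFinslerNorm Φ)
    (U : Set (EuclideanSpace ℝ (Fin N))) (hU : IsOpen U)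
    (φ : EuclideanSpace ℝ (Fin N) → ℝ) (hφC2 : ContDiffOn ℝ 2 φ U)
    (hφpos : ∀ z ∈ U, 0 < φ z)
    (hgrad : ∀ z ∈ U, gradient φ z ≠ 0)
    (hpde : ∀ z ∈ U, finslerLapE Φ φ z + c * φ z / dualNorm Φ z ^ 2 = 0)
    (F : EuclideanSpace ℝ (Fin N) × ℝ → EuclideanSpace ℝ (Fin N) × ℝ)
    (hF : ∀ p, F p =
      ((2 * p.2 / φ p.1) • (Φ (gradient φ p.1) • gradient Φ (gradient φ p.1)),
        p.2 ^ 2 / φ p.1 ^ 2 * Φ (gradient φ p.1) ^ 2 +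
          c * p.2 ^ 2 / dualNorm Φ p.1 ^ 2)) :
    ∀ z ∈ U, ∀ h : ℝ, div2 F (z, h) = 0 := by
  intro z hz h
  -- where `F` is not differentiable, `div2 F` is `0` by the convention `fderiv = 0`
  by_cases hFd : DifferentiableAt ℝ F (z, h)
  swap
  · exact div2_eq_zero_of_not_differentiableAt hFd
  have hφ : ContDiffAt ℝ 2 φ z := hφC2.contDiffAt (hU.mem_nhds hz)
  have hφz : φ z ≠ 0 := (hφpos z hz).ne'
  have hΦgrad : ContDiffAt ℝ 2 Φ (gradient φ z) := hΦ.contDiffAt (hgrad z hz)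
  have hgradφ : DifferentiableAt ℝ (gradient φ) z := hφ.differentiableAt_gradient
  have hW : DifferentiableAt ℝ (fun x => Φ (gradient φ x) • gradient Φ (gradient φ x)) z :=
    ((hΦgrad.differentiableAt two_ne_zero).comp z hgradφ).smul
      (hΦgrad.differentiableAt_gradient.comp z hgradφ)
  have hcoef : HasFDerivAt (fun x => 2 * h / φ x) ((2 * h * -(φ z ^ 2)⁻¹) • fderiv ℝ φ z) z :=
    ((hasDerivAt_inv hφz).const_mul (2 * h)).comp_hasFDerivAt z
      (hφ.differentiableAt two_ne_zero).hasFDerivAt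
  have hspace : divE (fun x => (F (x, h)).1) z =
      2 * h / φ z * -(c * φ z / dualNorm Φ z ^ 2) +
        2 * h * -(φ z ^ 2)⁻¹ * Φ (gradient φ z) ^ 2 := by
    simp only [hF]
    rw [divE_smul hcoef.differentiableAt hW, hcoef.fderiv, smul_apply,
      ← inner_gradient_left, hΦ.inner_smul_gradient (hgrad z hz), smul_eq_mul]
    congr 2
    exact eq_neg_of_add_eq_zero_left (hpde z hz)
  have htime : deriv (fun s => (F (z, s)).2) h =
      2 * h * (Φ (gradient φ z) ^ 2 / φ z ^ 2 + c / dualNorm Φ z ^ 2) := by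
    have hquad : (fun s => (F (z, s)).2) =
        fun s => s ^ 2 * (Φ (gradient φ z) ^ 2 / φ z ^ 2 + c / dualNorm Φ z ^ 2) := by
      funext s
      rw [hF]
      ring
    rw [hquad, ((hasDerivAt_pow 2 h).mul_const _).deriv]
    ring
  rw [div2_eq_divE_add_deriv hFd, hspace, htime]
  field_simp
  ring

/-- **The Weierstrass field `F` built from a solution `φ` is divergence free** (Section 4). -/
theorem field_divergence_free (N : ℕ) (hN : 3 ≤ N) (c : ℝ)
    (Φ : EuclideanSpace ℝ (Fin N) → ℝ) (hΦ : IsFinslerNorm Φ)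
    (U : Set (EuclideanSpace ℝ (Fin N))) (hU : IsOpen U)
    (h0U : (0 : EuclideanSpace ℝ (Fin N)) ∉ U)
    (φ : EuclideanSpace ℝ (Fin N) → ℝ) (hφC2 : ContDiffOn ℝ 2 φ U)
    (hφpos : ∀ z ∈ U, 0 < φ z)
    (hgrad : ∀ z ∈ U, gradient φ z ≠ 0)
    (hpde : ∀ z ∈ U, finslerLapE Φ φ z + c * φ z / dualNorm Φ z ^ 2 = 0)
    (F : EuclideanSpace ℝ (Fin N) × ℝ → EuclideanSpace ℝ (Fin N) × ℝ)
    (hF : ∀ p, F p =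
      ((2 * p.2 / φ p.1) • (Φ (gradient φ p.1) • gradient Φ (gradient φ p.1)),
        p.2 ^ 2 / φ p.1 ^ 2 * Φ (gradient φ p.1) ^ 2 +
          c * p.2 ^ 2 / dualNorm Φ p.1 ^ 2)) :
    ∀ z ∈ U, ∀ h : ℝ, div2 F (z, h) = 0 :=
  field_divergence_free_general N c Φ hΦ U hU φ hφC2 hφpos hgrad hpde F hF
end
end

section
/- Let N ≥ 3. Let H be a Finsler norm on ℝ^{N-1} with dual norm H⁰, let Φ(ξ,t) = √(H(ξ)²+t²) and Φ⁰(x,t) = √(H⁰(x)²+t²). Let f : (0, π/2) → ℝ be continuously differentiable and define φ(x,t) = Φ⁰(x,t)^{1−N/2} f(arctan(t/H⁰(x))) for x ≠ 0, t > 0. Then at every point (x,t) with x ≠ 0, t > 0 and ∇φ(x,t) ≠ 0, we have ⟨ Φ(∇φ) ∇Φ(∇φ), ∇Φ⁰(x,t) ⟩ = − ((N−2)/(2 Φ⁰(x,t))) φ(x,t), where ⟨·,·⟩ is the Euclidean inner product on ℝ^N. -/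
open Real MeasureTheory Filter Set

noncomputable section

/-! For `x ≠ 0` the linear form `⟪·, x⟫` has a unique maximiser `v` on the strictly convex unit
ball `{H ≤ 1}`, so `H⁰` is differentiable at `x` with `∇H⁰(x) = v`; and since `v` minimises
`H⁰(x) H(ξ) - ⟪ξ, x⟫`, also `∇H(v) = x / H⁰(x)`. Writing `φ(y, s) = ψ(H⁰(y), s)` with
`ψ(r, s) = √(r² + s²)^q g(s / r)`, `q = 1 - N/2`, `g = f ∘ arctan`, one gets `∇φ = (a v, b)` with
`(a, b) = ∇ψ`, then `Φ(∇φ) ∇Φ(∇φ) = (a x / H⁰(x), b)` and `∇Φ⁰ = (H⁰(x) v, t) / Φ⁰`. The pairing is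
therefore `(H⁰(x) a + t b) / Φ⁰`, which Euler's identity for the `q`-homogeneous `ψ` turns into
`q φ / Φ⁰`. -/

open Topology InnerProductSpace
open scoped RealInnerProductSpace

section Calculus

variable {E : Type*} [NormedAddCommGroup E] [InnerProductSpace ℝ E] [CompleteSpace E]

theorem HasDerivAt.comp_hasGradientAt {g : ℝ → ℝ} {F : E → ℝ} {g' : ℝ} {w x : E}
    (hg : HasDerivAt g g' (F x)) (hF : HasGradientAt F w x) :
    HasGradientAt (g ∘ F) (g' • w) x := by
  rw [hasGradientAt_iff_hasFDerivAt, map_smul]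
  exact hg.comp_hasFDerivAt x (hasGradientAt_iff_hasFDerivAt.1 hF)

theorem hasGradientAt_zero_of_abs_le_mul_sq {F : E → ℝ} {C : ℝ}
    (hF : ∀ ξ, |F ξ| ≤ C * ‖ξ‖ ^ 2) : HasGradientAt F 0 0 := by
  have hF0 : F 0 = 0 := abs_nonpos_iff.1 (by simpa using hF 0)
  rw [hasGradientAt_iff_isLittleO_nhds_zero]
  refine (Asymptotics.IsBigO.of_bound C (Eventually.of_forall fun ξ => ?_)).trans_isLittleO
    (Asymptotics.isLittleO_norm_pow_id one_lt_two)
  simpa [hF0] using hF ξ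

theorem HasGradientAt.smul_of_sq_homogeneous {F : E → ℝ}
    (hF : ∀ (c : ℝ) (ξ : E), F (c • ξ) = c ^ 2 * F ξ) {w ξ : E} (h : HasGradientAt F w ξ)
    {c : ℝ} (hc : c ≠ 0) : HasGradientAt F (c • w) (c • ξ) := by
  have hscale : HasFDerivAt (fun y : E => c⁻¹ • y) (c⁻¹ • ContinuousLinearMap.id ℝ E) (c • ξ) :=
    (hasFDerivAt_id _).const_smul c⁻¹
  rw [← inv_smul_smul₀ hc ξ, hasGradientAt_iff_hasFDerivAt] at h
  have hcomp := (h.comp (c • ξ) hscale).const_mul (c ^ 2)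
  have hfun : (fun y => c ^ 2 * (F ∘ fun y : E => c⁻¹ • y) y) = F := by
    funext y
    simp only [Function.comp, hF, inv_pow, mul_inv_cancel_left₀ (pow_ne_zero 2 hc)]
  rw [hfun] at hcomp
  rw [hasGradientAt_iff_hasFDerivAt]
  refine hcomp.congr_fderiv (ContinuousLinearMap.ext fun y => ?_)
  simp only [ContinuousLinearMap.comp_smulₛₗ, map_inv₀, ringHom_apply, ContinuousLinearMap.comp_id,
    smul_apply, toDual_apply_apply, smul_eq_mul, map_smul]
  field_simp

end Calculus

theorem grad2_eq_of_eq_comp {n : ℕ} {u : EuclideanSpace ℝ (Fin n) × ℝ → ℝ}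
    {N : EuclideanSpace ℝ (Fin n) → ℝ} {G : ℝ → ℝ → ℝ} (hu : ∀ y s, u (y, s) = G (N y) s)
    {x w : EuclideanSpace ℝ (Fin n)} {t a b : ℝ} (hN : HasGradientAt N w x)
    (ha : HasDerivAt (fun r => G r t) a (N x)) (hb : HasDerivAt (G (N x)) b t) :
    grad2 u (x, t) = (a • w, b) := by
  simp only [grad2, gradX, dT, hu]
  exact Prod.ext (ha.comp_hasGradientAt hN).gradient hb.deriv

theorem exists_hasDerivAt_euler {q r t : ℝ} {g : ℝ → ℝ} (hr : r ≠ 0)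
    (hg : DifferentiableAt ℝ g (t / r)) :
    ∃ a b, HasDerivAt (fun s => √(s ^ 2 + t ^ 2) ^ q * g (t / s)) a r ∧
      HasDerivAt (fun s => √(r ^ 2 + s ^ 2) ^ q * g (s / r)) b t ∧
      r * a + t * b = q * (√(r ^ 2 + t ^ 2) ^ q * g (t / r)) := by
  have hsum : r ^ 2 + t ^ 2 ≠ 0 := by positivity
  have hρ : 0 < √(r ^ 2 + t ^ 2) := Real.sqrt_pos.2 (by positivity)
  have hρr := (((hasDerivAt_pow 2 r).add_const (t ^ 2)).sqrt hsum).rpow_const (p := q)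
    (Or.inl hρ.ne')
  have hρt := (((hasDerivAt_pow 2 t).const_add (r ^ 2)).sqrt hsum).rpow_const (p := q)
    (Or.inl hρ.ne')
  have hgr := hg.hasDerivAt.comp r ((hasDerivAt_inv hr).const_mul t)
  have hgt := hg.hasDerivAt.comp t ((hasDerivAt_id t).div_const r)
  refine ⟨_, _, hρr.mul hgr, hρt.mul hgt, ?_⟩
  have hsq : √(r ^ 2 + t ^ 2) ^ 2 = r ^ 2 + t ^ 2 := Real.sq_sqrt (by positivity)
  rw [Real.rpow_sub_one hρ.ne']
  field_simp
  linear_combination (-2 * r * q * g (t / r)) * hsq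

theorem dualNorm_zero {n : ℕ} {H : EuclideanSpace ℝ (Fin n) → ℝ} : dualNorm H 0 = 0 := by
  have h : ∀ a ∈ (fun ξ => ⟪ξ, 0⟫ / H ξ) '' {ξ : EuclideanSpace ℝ (Fin n) | ξ ≠ 0}, a = 0 := by
    rintro _ ⟨ξ, -, rfl⟩
    simp
  exact le_antisymm (Real.sSup_nonpos fun a ha => (h a ha).le)
    (Real.sSup_nonneg fun a ha => (h a ha).ge)

namespace IsFinslerNorm

variable {n : ℕ} {H : EuclideanSpace ℝ (Fin n) → ℝ}

theorem map_zero (hH : IsFinslerNorm H) : H 0 = 0 := by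
  simpa using hH.homog 0 0

theorem pos (hH : IsFinslerNorm H) {ξ : EuclideanSpace ℝ (Fin n)} (hξ : ξ ≠ 0) : 0 < H ξ := by
  obtain ⟨γ₁, γ₂, hγ₁, -, hb⟩ := hH.bounds
  exact lt_of_lt_of_le (mul_pos hγ₁ (norm_pos_iff.2 hξ)) (hb ξ).1

theorem exists_abs_sq_le (hH : IsFinslerNorm H) : ∃ C, ∀ ξ, |H ξ ^ 2| ≤ C * ‖ξ‖ ^ 2 := by
  obtain ⟨γ₁, γ₂, -, -, hb⟩ := hH.bounds
  refine ⟨γ₂ ^ 2, fun ξ => ?_⟩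
  rw [abs_of_nonneg (sq_nonneg _), ← mul_pow]
  exact pow_le_pow_left₀ (hH.nonneg ξ) (hb ξ).2 2

theorem continuous (hH : IsFinslerNorm H) : Continuous H := by
  refine continuous_iff_continuousAt.2 fun ξ => ?_
  rcases eq_or_ne ξ 0 with rfl | hξ
  · obtain ⟨γ₁, γ₂, -, -, hb⟩ := hH.bounds
    have hlim : Tendsto (fun ξ : EuclideanSpace ℝ (Fin n) => γ₂ * ‖ξ‖) (𝓝 0) (𝓝 0) := by
      simpa using tendsto_norm_zero.const_mul γ₂
    rw [ContinuousAt, hH.map_zero]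
    exact squeeze_zero hH.nonneg (fun ξ => (hb ξ).2) hlim
  · exact hH.contDiff.continuousOn.continuousAt (isOpen_compl_singleton.mem_nhds hξ)

theorem isBounded_sublevel (hH : IsFinslerNorm H) :
    Bornology.IsBounded {ξ : EuclideanSpace ℝ (Fin n) | H ξ ≤ 1} := by
  obtain ⟨γ₁, γ₂, hγ₁, -, hb⟩ := hH.bounds
  refine isBounded_iff_forall_norm_le.2 ⟨γ₁⁻¹, fun ξ hξ => ?_⟩
  rw [← one_div, le_div_iff₀' hγ₁]
  exact (hb ξ).1.trans hξ

theorem isCompact_sublevel (hH : IsFinslerNorm H) :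
    IsCompact {ξ : EuclideanSpace ℝ (Fin n) | H ξ ≤ 1} :=
  Metric.isCompact_of_isClosed_isBounded (isClosed_le hH.continuous continuous_const)
    hH.isBounded_sublevel

theorem bddAbove_dualNorm_set (hH : IsFinslerNorm H) (y : EuclideanSpace ℝ (Fin n)) :
    BddAbove ((fun ξ => ⟪ξ, y⟫ / H ξ) '' {ξ : EuclideanSpace ℝ (Fin n) | ξ ≠ 0}) := by
  obtain ⟨γ₁, γ₂, hγ₁, -, hb⟩ := hH.bounds
  refine ⟨‖y‖ / γ₁, ?_⟩
  rintro _ ⟨ξ, hξ, rfl⟩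
  rw [div_le_div_iff₀ (hH.pos hξ) hγ₁]
  calc ⟪ξ, y⟫ * γ₁ ≤ ‖ξ‖ * ‖y‖ * γ₁ := by gcongr; exact real_inner_le_norm ξ y
    _ = ‖y‖ * (γ₁ * ‖ξ‖) := by ring
    _ ≤ ‖y‖ * H ξ := by gcongr; exact (hb ξ).1

theorem inner_le_mul_dualNorm (hH : IsFinslerNorm H) (ξ y : EuclideanSpace ℝ (Fin n)) :
    ⟪ξ, y⟫ ≤ H ξ * dualNorm H y := by
  rcases eq_or_ne ξ 0 with rfl | hξ
  · simp [hH.map_zero]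
  · rw [← div_le_iff₀' (hH.pos hξ)]
    exact le_csSup (hH.bddAbove_dualNorm_set y) ⟨ξ, hξ, rfl⟩

theorem dualNorm_pos (hH : IsFinslerNorm H) {x : EuclideanSpace ℝ (Fin n)} (hx : x ≠ 0) :
    0 < dualNorm H x := by
  refine lt_of_lt_of_le ?_ (le_csSup (hH.bddAbove_dualNorm_set x) ⟨x, hx, rfl⟩)
  show 0 < ⟪x, x⟫ / H x
  rw [real_inner_self_eq_norm_sq]
  exact div_pos (pow_pos (norm_pos_iff.2 hx) 2) (hH.pos hx)

theorem dualNorm_nonneg (hH : IsFinslerNorm H) (x : EuclideanSpace ℝ (Fin n)) :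
    0 ≤ dualNorm H x := by
  rcases eq_or_ne x 0 with rfl | hx
  · exact dualNorm_zero.ge
  · exact (hH.dualNorm_pos hx).le

theorem inner_le_dualNorm (hH : IsFinslerNorm H) {ξ : EuclideanSpace ℝ (Fin n)} (hξ : H ξ ≤ 1)
    (y : EuclideanSpace ℝ (Fin n)) : ⟪ξ, y⟫ ≤ dualNorm H y :=
  (hH.inner_le_mul_dualNorm ξ y).trans
    (mul_le_of_le_one_left (hH.dualNorm_nonneg y) hξ)

theorem exists_inner_eq_dualNorm (hH : IsFinslerNorm H) (y : EuclideanSpace ℝ (Fin n)) :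
    ∃ v, H v ≤ 1 ∧ ⟪v, y⟫ = dualNorm H y := by
  rcases eq_or_ne y 0 with rfl | hy
  · exact ⟨0, by simp [hH.map_zero], by simp [dualNorm_zero]⟩
  obtain ⟨v, hv, hmax⟩ := hH.isCompact_sublevel.exists_isMaxOn (f := fun ξ => ⟪ξ, y⟫)
    ⟨0, by simp [hH.map_zero]⟩ (by fun_prop)
  refine ⟨v, hv, le_antisymm (hH.inner_le_dualNorm hv y) ?_⟩
  refine csSup_le ⟨_, y, hy, rfl⟩ ?_
  rintro _ ⟨ξ, hξ, rfl⟩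
  have hHξ := hH.pos hξ
  have hunit : H ((H ξ)⁻¹ • ξ) ≤ 1 := by
    rw [hH.homog, abs_of_pos (inv_pos.2 hHξ), inv_mul_cancel₀ hHξ.ne']
  simpa [real_inner_smul_left, div_eq_inv_mul] using hmax hunit

theorem eq_of_inner_eq_dualNorm (hH : IsFinslerNorm H) {x v₁ v₂ : EuclideanSpace ℝ (Fin n)}
    (hx : x ≠ 0) (hv₁ : H v₁ ≤ 1) (hv₁x : ⟪v₁, x⟫ = dualNorm H x) (hv₂ : H v₂ ≤ 1)
    (hv₂x : ⟪v₂, x⟫ = dualNorm H x) : v₁ = v₂ := by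
  by_contra hne
  set m := (1 / 2 : ℝ) • v₁ + (1 / 2 : ℝ) • v₂
  have hm : {ξ | H ξ ≤ 1} ∈ 𝓝 m := mem_interior_iff_mem_nhds.1 <|
    hH.strictConvex hv₁ hv₂ hne (by norm_num) (by norm_num) (by norm_num)
  have hline : Tendsto (fun s : ℝ => m + s • x) (𝓝[>] 0) (𝓝 m) := by
    have : Continuous fun s : ℝ => m + s • x := by fun_prop
    simpa using (this.tendsto 0).mono_left nhdsWithin_le_nhds
  obtain ⟨s, hs, hs0⟩ := ((hline.eventually hm).and self_mem_nhdsWithin).exists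
  have hinner : ⟪m + s • x, x⟫ = dualNorm H x + s * ‖x‖ ^ 2 := by
    simp only [m, inner_add_left, real_inner_smul_left, hv₁x, hv₂x, real_inner_self_eq_norm_sq]
    ring
  have hle := hH.inner_le_dualNorm hs x
  rw [hinner] at hle
  linarith [mul_pos hs0 (pow_pos (norm_pos_iff.2 hx) 2)]

theorem continuous_dualNorm (hH : IsFinslerNorm H) : Continuous (dualNorm H) := by
  obtain ⟨C, hC⟩ := isBounded_iff_forall_norm_le.1 hH.isBounded_sublevel
  refine (LipschitzWith.of_le_add_mul' C fun y z => ?_).continuous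
  obtain ⟨v, hv, hvy⟩ := hH.exists_inner_eq_dualNorm y
  calc dualNorm H y = ⟪v, z⟫ + ⟪v, y - z⟫ := by rw [← hvy, inner_sub_right]; ring
    _ ≤ dualNorm H z + ‖v‖ * ‖y - z‖ :=
      add_le_add (hH.inner_le_dualNorm hv z) (real_inner_le_norm v _)
    _ ≤ dualNorm H z + C * dist y z := by
      rw [dist_eq_norm]; gcongr; exact hC v hv

theorem tendsto_of_inner_eq_dualNorm (hH : IsFinslerNorm H)
    {V : EuclideanSpace ℝ (Fin n) → EuclideanSpace ℝ (Fin n)} (hV : ∀ y, H (V y) ≤ 1)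
    (hVy : ∀ y, ⟪V y, y⟫ = dualNorm H y) {x v : EuclideanSpace ℝ (Fin n)} (hx : x ≠ 0)
    (hv : H v ≤ 1) (hvx : ⟪v, x⟫ = dualNorm H x) : Tendsto V (𝓝 x) (𝓝 v) := by
  refine hH.isCompact_sublevel.tendsto_nhds_of_unique_mapClusterPt (Eventually.of_forall hV)
    fun w hw hcl => hH.eq_of_inner_eq_dualNorm hx hw ?_ hv hvx
  -- a cluster point `w` of `V` at `x` still attains `H⁰(x)`, by continuity along the graph of `V`
  have hgraph : MapClusterPt (w, x) (𝓝 x) fun y => (V y, y) := by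
    rw [((𝓝 w).basis_sets.prod_nhds (𝓝 x).basis_sets).mapClusterPt_iff_frequently]
    rintro ⟨s, t⟩ ⟨hs, ht⟩
    exact (mapClusterPt_iff_frequently.1 hcl s hs).and_eventually ht
  have hgap : Continuous fun p : EuclideanSpace ℝ (Fin n) × EuclideanSpace ℝ (Fin n) =>
      ⟪p.1, p.2⟫ - dualNorm H p.2 := by
    have := hH.continuous_dualNorm
    fun_prop
  have h0 := hgraph.continuousAt_comp hgap.continuousAt
  simp only [Function.comp_def, hVy, sub_self] at h0
  exact sub_eq_zero.1 (eq_of_nhds_neBot (h0.neBot.mono (inf_le_inf_left _ tendsto_const_nhds)))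

theorem hasGradientAt_dualNorm (hH : IsFinslerNorm H) {x v : EuclideanSpace ℝ (Fin n)}
    (hx : x ≠ 0) (hv : H v ≤ 1) (hvx : ⟪v, x⟫ = dualNorm H x) :
    HasGradientAt (dualNorm H) v x := by
  choose V hV hVy using hH.exists_inner_eq_dualNorm
  have hshift : Tendsto (fun h : EuclideanSpace ℝ (Fin n) => x + h) (𝓝 0) (𝓝 x) := by
    simpa using tendsto_const_nhds.add (tendsto_id (x := 𝓝 (0 : EuclideanSpace ℝ (Fin n))))
  have hlim : Tendsto (fun h => ‖V (x + h) - v‖) (𝓝 0) (𝓝 0) := by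
    simpa using ((hH.tendsto_of_inner_eq_dualNorm hV hVy hx hv hvx).comp hshift).sub_const v
      |>.norm
  have hsmall : (fun h => ‖V (x + h) - v‖ * ‖h‖) =o[𝓝 0] fun h => ‖h‖ := by
    simpa using ((Asymptotics.isLittleO_one_iff ℝ).2 hlim).mul_isBigO
      (Asymptotics.isBigO_refl (fun h : EuclideanSpace ℝ (Fin n) => ‖h‖) _)
  rw [hasGradientAt_iff_isLittleO_nhds_zero]
  refine (Asymptotics.IsBigO.of_bound' (Eventually.of_forall fun h => ?_)).trans_isLittleO
    (Asymptotics.isLittleO_norm_right.1 hsmall)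
  have hlow : ⟪v, x⟫ + ⟪v, h⟫ ≤ dualNorm H (x + h) := by
    rw [← inner_add_right]; exact hH.inner_le_dualNorm hv _
  have hup : dualNorm H (x + h) ≤ dualNorm H x + ⟪V (x + h), h⟫ := by
    rw [← hVy, inner_add_right]; gcongr; exact hH.inner_le_dualNorm (hV _) x
  have hcs : ⟪V (x + h) - v, h⟫ ≤ ‖V (x + h) - v‖ * ‖h‖ := real_inner_le_norm _ _
  rw [inner_sub_left] at hcs
  rw [Real.norm_eq_abs, norm_mul, norm_norm, norm_norm, abs_le]
  constructor <;> linarith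

theorem eq_one_of_inner_eq_dualNorm (hH : IsFinslerNorm H) {x v : EuclideanSpace ℝ (Fin n)}
    (hx : x ≠ 0) (hv : H v ≤ 1) (hvx : ⟪v, x⟫ = dualNorm H x) : H v = 1 := by
  refine le_antisymm hv (le_of_mul_le_mul_right ?_ (hH.dualNorm_pos hx))
  simpa [hvx] using hH.inner_le_mul_dualNorm v x

theorem hasGradientAt_of_inner_eq_dualNorm (hH : IsFinslerNorm H)
    {x v : EuclideanSpace ℝ (Fin n)} (hx : x ≠ 0) (hv : H v = 1) (hvx : ⟪v, x⟫ = dualNorm H x) :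
    HasGradientAt H ((dualNorm H x)⁻¹ • x) v := by
  have hv0 : v ≠ 0 := by rintro rfl; simp [hH.map_zero] at hv
  have hHv : HasFDerivAt H (fderiv ℝ H v) v :=
    ((hH.contDiff.differentiableOn (by norm_num)).differentiableAt
      (isOpen_compl_singleton.mem_nhds hv0)).hasFDerivAt
  set r := dualNorm H x
  have hgap : HasFDerivAt (fun ξ => r * H ξ - ⟪x, ξ⟫) (r • fderiv ℝ H v - innerSL ℝ x) v :=
    (hHv.const_mul r).sub (innerSL ℝ x).hasFDerivAt
  have hmin : IsLocalMin (fun ξ => r * H ξ - ⟪x, ξ⟫) v :=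
    Eventually.of_forall fun ξ => by
      change r * H v - ⟪x, v⟫ ≤ r * H ξ - ⟪x, ξ⟫
      rw [hv, real_inner_comm, hvx, real_inner_comm]
      linarith [hH.inner_le_mul_dualNorm ξ x]
  have h0 := hmin.hasFDerivAt_eq_zero hgap
  rw [hasGradientAt_iff_hasFDerivAt]
  refine hHv.congr_fderiv (ContinuousLinearMap.ext fun y => ?_)
  have h0y := congrArg (fun L => L y) h0
  simp only [sub_apply, smul_apply, innerSL_apply_apply, smul_eq_mul, zero_apply] at h0y
  rw [toDual_apply_apply, real_inner_smul_left, show ⟪x, y⟫ = r * fderiv ℝ H v y by linarith,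
    inv_mul_cancel_left₀ (hH.dualNorm_pos hx).ne']

theorem hasGradientAt_sq_smul (hH : IsFinslerNorm H) {x v : EuclideanSpace ℝ (Fin n)}
    (hx : x ≠ 0) (hv : H v ≤ 1) (hvx : ⟪v, x⟫ = dualNorm H x) (c : ℝ) :
    HasGradientAt (fun ξ => H ξ ^ 2) ((2 * c / dualNorm H x) • x) (c • v) := by
  rcases eq_or_ne c 0 with rfl | hc
  · obtain ⟨C, hC⟩ := hH.exists_abs_sq_le
    simpa using hasGradientAt_zero_of_abs_le_mul_sq hC
  have hv1 := hH.eq_one_of_inner_eq_dualNorm hx hv hvx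
  have hsq : HasGradientAt (fun ξ => H ξ ^ 2) ((2 : ℝ) • (dualNorm H x)⁻¹ • x) v := by
    simpa [hv1, Function.comp_def] using (hasDerivAt_pow 2 (H v)).comp_hasGradientAt
      (hH.hasGradientAt_of_inner_eq_dualNorm hx hv1 hvx)
  have := hsq.smul_of_sq_homogeneous (fun c ξ => by rw [hH.homog, mul_pow, sq_abs]) hc
  rwa [smul_smul, smul_smul, mul_comm c, ← div_eq_mul_inv] at this

theorem exists_grad2_eq_smul_and_euler (hH : IsFinslerNorm H)
    {Φ0 φ : EuclideanSpace ℝ (Fin n) × ℝ → ℝ}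
    (hΦ0 : ∀ p, Φ0 p = √(dualNorm H p.1 ^ 2 + p.2 ^ 2)) {q : ℝ} {g : ℝ → ℝ}
    (hφ : ∀ p, φ p = Φ0 p ^ q * g (p.2 / dualNorm H p.1)) {x v : EuclideanSpace ℝ (Fin n)}
    (hx : x ≠ 0) (hv : H v ≤ 1) (hvx : ⟪v, x⟫ = dualNorm H x) {t : ℝ}
    (hg : DifferentiableAt ℝ g (t / dualNorm H x)) :
    ∃ a b, grad2 φ (x, t) = (a • v, b) ∧ dualNorm H x * a + t * b = q * φ (x, t) := by
  obtain ⟨a, b, ha, hb, heuler⟩ := exists_hasDerivAt_euler (q := q) (hH.dualNorm_pos hx).ne' hg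
  refine ⟨a, b, grad2_eq_of_eq_comp (G := fun r s => √(r ^ 2 + s ^ 2) ^ q * g (s / r))
    (fun y s => by rw [hφ, hΦ0]) (hH.hasGradientAt_dualNorm hx hv hvx) ha hb, ?_⟩
  rw [heuler, hφ, hΦ0]

theorem grad2_eq_of_eq_sqrt_dualNorm (hH : IsFinslerNorm H)
    {Φ0 : EuclideanSpace ℝ (Fin n) × ℝ → ℝ}
    (hΦ0 : ∀ p, Φ0 p = √(dualNorm H p.1 ^ 2 + p.2 ^ 2)) {x v : EuclideanSpace ℝ (Fin n)}
    (hx : x ≠ 0) (hv : H v ≤ 1) (hvx : ⟪v, x⟫ = dualNorm H x) (t : ℝ) :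
    grad2 Φ0 (x, t) = ((dualNorm H x / Φ0 (x, t)) • v, t / Φ0 (x, t)) := by
  have hsum : dualNorm H x ^ 2 + t ^ 2 ≠ 0 := by have := hH.dualNorm_pos hx; positivity
  rw [grad2_eq_of_eq_comp (G := fun r s => √(r ^ 2 + s ^ 2)) (fun y s => hΦ0 (y, s))
    (hH.hasGradientAt_dualNorm hx hv hvx) (((hasDerivAt_pow 2 _).add_const (t ^ 2)).sqrt hsum)
    (((hasDerivAt_pow 2 t).const_add _).sqrt hsum), hΦ0]
  norm_num [mul_div_mul_left]

theorem smul_grad2_eq_of_eq_sqrt (hH : IsFinslerNorm H) {Φ : EuclideanSpace ℝ (Fin n) × ℝ → ℝ}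
    (hΦ : ∀ p, Φ p = √(H p.1 ^ 2 + p.2 ^ 2)) {x v : EuclideanSpace ℝ (Fin n)} (hx : x ≠ 0)
    (hv : H v ≤ 1) (hvx : ⟪v, x⟫ = dualNorm H x) {a b : ℝ} (hab : a ^ 2 + b ^ 2 ≠ 0) :
    Φ (a • v, b) • grad2 Φ (a • v, b) = ((a / dualNorm H x) • x, b) := by
  have hHav : H (a • v) ^ 2 = a ^ 2 := by
    rw [hH.homog, hH.eq_one_of_inner_eq_dualNorm hx hv hvx, mul_one, sq_abs]
  rw [grad2_eq_of_eq_comp (G := fun r s => √(r + s ^ 2)) (fun y s => hΦ (y, s))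
    (hH.hasGradientAt_sq_smul hx hv hvx a)
    (((hasDerivAt_id _).add_const (b ^ 2)).sqrt (by rwa [id, hHav]))
    (((hasDerivAt_pow 2 b).const_add _).sqrt (by rwa [hHav])), hΦ]
  have hρ : 0 < √(a ^ 2 + b ^ 2) := Real.sqrt_pos.2 (by positivity)
  norm_num [hHav, smul_smul]
  constructor <;> field_simp

end IsFinslerNorm

theorem flux_identity_general (N : ℕ)
    (H : EuclideanSpace ℝ (Fin (N - 1)) → ℝ) (hH : IsFinslerNorm H)
    (Φ Φ0 : EuclideanSpace ℝ (Fin (N - 1)) × ℝ → ℝ)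
    (hΦ : ∀ p, Φ p = Real.sqrt (H p.1 ^ 2 + p.2 ^ 2))
    (hΦ0 : ∀ p, Φ0 p = Real.sqrt (dualNorm H p.1 ^ 2 + p.2 ^ 2))
    (f : ℝ → ℝ) (hf : ContDiffOn ℝ 1 f (Ioo 0 (π / 2)))
    (φ : EuclideanSpace ℝ (Fin (N - 1)) × ℝ → ℝ)
    (hφ : ∀ p, φ p = Φ0 p ^ (1 - (N : ℝ) / 2) * f (Real.arctan (p.2 / dualNorm H p.1))) :
    ∀ x : EuclideanSpace ℝ (Fin (N - 1)), x ≠ 0 → ∀ t : ℝ, 0 < t →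
      grad2 φ (x, t) ≠ 0 →
      (inner ℝ (Φ (grad2 φ (x, t)) • grad2 Φ (grad2 φ (x, t))).1 (grad2 Φ0 (x, t)).1 : ℝ) +
          (Φ (grad2 φ (x, t)) • grad2 Φ (grad2 φ (x, t))).2 * (grad2 Φ0 (x, t)).2 =
        -((N - 2) / (2 * Φ0 (x, t))) * φ (x, t) := by
  intro x hx t ht hgrad
  obtain ⟨v, hv, hvx⟩ := hH.exists_inner_eq_dualNorm x
  have hr := hH.dualNorm_pos hx
  have hθ : arctan (t / dualNorm H x) ∈ Ioo 0 (π / 2) :=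
    ⟨arctan_pos.2 (div_pos ht hr), arctan_lt_pi_div_two _⟩
  have hg : DifferentiableAt ℝ (f ∘ arctan) (t / dualNorm H x) :=
    ((hf.differentiableOn one_ne_zero).differentiableAt (isOpen_Ioo.mem_nhds hθ)).comp _
      (differentiableAt_arctan _)
  obtain ⟨a, b, hφgrad, heuler⟩ := hH.exists_grad2_eq_smul_and_euler hΦ0 hφ hx hv hvx hg
  have hab : a ^ 2 + b ^ 2 ≠ 0 := by
    contrapose! hgrad
    obtain ⟨rfl, rfl⟩ : a = 0 ∧ b = 0 := by constructor <;> nlinarith [sq_nonneg a, sq_nonneg b]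
    simp [hφgrad]
  have hρ : 0 < Φ0 (x, t) := by rw [hΦ0]; exact Real.sqrt_pos.2 (by positivity)
  rw [hφgrad, hH.smul_grad2_eq_of_eq_sqrt hΦ hx hv hvx hab,
    hH.grad2_eq_of_eq_sqrt_dualNorm hΦ0 hx hv hvx]
  simp only [real_inner_smul_left, real_inner_smul_right, real_inner_comm v x, hvx]
  field_simp
  linear_combination 2 * heuler

/-- **The key flux identity (4.9): `⟨Φ(∇φ)∇Φ(∇φ), ∇Φ⁰⟩ = -((N-2)/(2Φ⁰)) φ`**. -/
theorem flux_identity (N : ℕ) (hN : 3 ≤ N)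
    (H : EuclideanSpace ℝ (Fin (N - 1)) → ℝ) (hH : IsFinslerNorm H)
    (Φ Φ0 : EuclideanSpace ℝ (Fin (N - 1)) × ℝ → ℝ)
    (hΦ : ∀ p, Φ p = Real.sqrt (H p.1 ^ 2 + p.2 ^ 2))
    (hΦ0 : ∀ p, Φ0 p = Real.sqrt (dualNorm H p.1 ^ 2 + p.2 ^ 2))
    (f : ℝ → ℝ) (hf : ContDiffOn ℝ 1 f (Ioo 0 (π / 2)))
    (φ : EuclideanSpace ℝ (Fin (N - 1)) × ℝ → ℝ)
    (hφ : ∀ p, φ p = Φ0 p ^ (1 - (N : ℝ) / 2) * f (Real.arctan (p.2 / dualNorm H p.1))) :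
    ∀ x : EuclideanSpace ℝ (Fin (N - 1)), x ≠ 0 → ∀ t : ℝ, 0 < t →
      grad2 φ (x, t) ≠ 0 →
      (inner ℝ (Φ (grad2 φ (x, t)) • grad2 Φ (grad2 φ (x, t))).1 (grad2 Φ0 (x, t)).1 : ℝ) +
          (Φ (grad2 φ (x, t)) • grad2 Φ (grad2 φ (x, t))).2 * (grad2 Φ0 (x, t)).2 =
        -((N - 2) / (2 * Φ0 (x, t))) * φ (x, t) :=
  flux_identity_general N H hH Φ Φ0 hΦ hΦ0 f hf φ hφ
end
end
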